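/- In the avg-EQ reduction instance built from a simple graph H = (V, E) and an integer k ≥ 4 with |V| + |E| ≥ k², under avg-EQ utilities, the following holds: if a coalition C blocks the coalition structure Γ, then every player of C is a vertex player v', an edge player e', an incidence player b_{v,e}, or a mid player of a vertex gadget P_v; in particular, C contains no base-clique players of any gadget and no mid players of edge or incidence gadgets. -/

import Mathlib

/-!
Every gadget is closed except at its top player, and a valuation is worth `n` per friend, so a
player's avg-EQ utility is essentially `n` times the average number of friends in its friend
group. A base-clique player who joins a blocking coalition `C` must therefore keep almost all of
its clique: a fringe player forces more than `d` clique players into `C`, and then a non-fringe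
clique player forces the whole clique into `C`. From then on the friend groups involved are the
same in `C` as at home, and each friendship lost costs `n + 1` while a smaller coalition gains at
most `d + 1` per member; this forces every mid player into `C` and finally, through a fringe
player whose mid player loses the top player (or, if the top player comes along, gains nothing),
gives a contradiction. The mid players of edge and incidence gadgets cannot gain either: at home
their friend group has average valuation above `4n`, while in `C`, without their fringe player,
their group is at most themselves and a top player with at most four friends.
-/

open Finset
open scoped Classical

section AHGDefs

variable {N : Type*} [Fintype N] [DecidableEq N]

/-- The set of friends of player `i` inside coalition `C`. -/
noncomputable def friendsIn (G : SimpleGraph N) (C : Finset N) (i : N) : Finset N :=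
  C.filter fun j => G.Adj i j

/-- The friend-oriented valuation of coalition `C` by player `i`:
`val_i(C) = n·|F_i ∩ C| − |E_i ∩ C|`. -/
noncomputable def fval (G : SimpleGraph N) (C : Finset N) (i : N) : ℤ :=
  (Fintype.card N : ℤ) * ((friendsIn G C i).card : ℤ)
    - ((C.filter fun j => ¬ G.Adj i j ∧ j ≠ i).card : ℤ)

/-- Average-based equal-treatment utility. -/
noncomputable def utilAvgEQ (G : SimpleGraph N) (C : Finset N) (i : N) : ℚ :=
  (∑ c ∈ insert i (friendsIn G C i), (fval G C c : ℚ)) /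
    ((insert i (friendsIn G C i)).card : ℚ)

/-- Average-based altruistic-treatment utility with weight `w`. -/
noncomputable def utilAvgAL (G : SimpleGraph N) (w : ℚ) (C : Finset N) (i : N) : ℚ :=
  (fval G C i : ℚ) +
    w * (if (friendsIn G C i).Nonempty then
          (∑ c ∈ friendsIn G C i, (fval G C c : ℚ)) / ((friendsIn G C i).card : ℚ)
         else 0)

/-- Min-based equal-treatment utility. -/
noncomputable def utilMinEQ (G : SimpleGraph N) (C : Finset N) (i : N) : ℤ :=
  (insert i (friendsIn G C i)).inf' (insert_nonempty _ _) (fval G C)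

/-- Min-based altruistic-treatment utility with weight `w`. -/
noncomputable def utilMinAL (G : SimpleGraph N) (w : ℤ) (C : Finset N) (i : N) : ℤ :=
  fval G C i +
    w * (if h : (friendsIn G C i).Nonempty then (friendsIn G C i).inf' h (fval G C) else 0)

/-- A coalition structure (partition of the players), given as the map sending
each player to its coalition. -/
structure CoalitionStructure (N : Type*) [Fintype N] [DecidableEq N] where
  part : N → Finset N
  mem_part : ∀ i, i ∈ part i
  part_eq : ∀ i j, j ∈ part i → part j = part i

/-- A (nonempty) coalition `C` blocks the coalition structure `Γ`. -/
def Blocks {α : Type*} [LT α] (util : Finset N → N → α) (Γ : CoalitionStructure N)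
    (C : Finset N) : Prop :=
  C.Nonempty ∧ ∀ i ∈ C, util (Γ.part i) i < util C i

/-- Core stability: no nonempty coalition blocks `Γ`. -/
def CoreStable {α : Type*} [LT α] (util : Finset N → N → α)
    (Γ : CoalitionStructure N) : Prop :=
  ¬ ∃ C : Finset N, Blocks util Γ C

/-- The base clique of a `(d,k')`-dome gadget on `P` with top player `top`
and mid players `mid`. -/
noncomputable def domeBase {d : ℕ} (P : Finset N) (top : N) (mid : Fin d → N) : Finset N :=
  P \ insert top (Finset.univ.image mid)

/-- `P` carries a `(d,k')`-dome gadget of the graph `G`, with top player `top`,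
mid players `mid i` and fringe players `fringe i`. -/
structure IsDomeGadget (G : SimpleGraph N) (d k' : ℕ) (P : Finset N) (top : N)
    (mid fringe : Fin d → N) : Prop where
  card_eq : P.card = k'
  top_mem : top ∈ P
  mid_mem : ∀ i, mid i ∈ P
  mid_inj : Function.Injective mid
  mid_ne_top : ∀ i, mid i ≠ top
  fringe_mem : ∀ i, fringe i ∈ domeBase P top mid
  fringe_inj : Function.Injective fringe
  adj_iff : ∀ x ∈ P, ∀ y ∈ P, (G.Adj x y ↔
    ((x = top ∧ ∃ i, y = mid i) ∨ (y = top ∧ ∃ i, x = mid i) ∨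
     (x ∈ domeBase P top mid ∧ y ∈ domeBase P top mid ∧ x ≠ y) ∨
     (∃ i, (x = mid i ∧ y = fringe i) ∨ (y = mid i ∧ x = fringe i))))

/-- `P` carries a `(d,k')`-dome gadget with top player `top` (mid and fringe
players existentially quantified). -/
def HasDomeGadget (G : SimpleGraph N) (d k' : ℕ) (P : Finset N) (top : N) : Prop :=
  ∃ mid fringe : Fin d → N, IsDomeGadget G d k' P top mid fringe

/-- The gadget size `k' = k + 3·(k choose 2) + 1` of the average-based reductions. -/
def avgK' (k : ℕ) : ℕ := k + 3 * Nat.choose k 2 + 1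

variable {V : Type*} [Fintype V] [DecidableEq V]

/-- `Γ` is the coalition structure of the average-based reduction instances: its
coalitions are exactly the gadget player sets. -/
def IsAvgGamma (H : SimpleGraph V) (Pv : V → Finset N) (Pe : Sym2 V → Finset N)
    (Pve : V → Sym2 V → Finset N) (Γ : CoalitionStructure N) : Prop :=
  (∀ v : V, ∀ i ∈ Pv v, Γ.part i = Pv v) ∧
  (∀ e ∈ H.edgeSet, ∀ i ∈ Pe e, Γ.part i = Pe e) ∧
  (∀ (v : V), ∀ e ∈ H.edgeSet, v ∈ e → ∀ i ∈ Pve v e, Γ.part i = Pve v e)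

/-- The avg-EQ reduction instance built from the graph `H` and `k ≥ 4`:
`G` is the constructed network of friends; `Pv v` carries a `(k−1,k')`-dome gadget
with top player `vp v`, `Pe e` a `(2,k')`-dome gadget with top player `ep e`, and
`Pve v e` a `(2,k')`-dome gadget with top player `bp v e`. Each `bp v e` is further
adjacent to `vp v` and `ep e`, and there are no other edges. -/
structure AvgEQReduction (H : SimpleGraph V) (k : ℕ) (G : SimpleGraph N)
    (Pv : V → Finset N) (Pe : Sym2 V → Finset N) (Pve : V → Sym2 V → Finset N)
    (vp : V → N) (ep : Sym2 V → N) (bp : V → Sym2 V → N) : Prop where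
  dome_v : ∀ v : V, HasDomeGadget G (k - 1) (avgK' k) (Pv v) (vp v)
  dome_e : ∀ e ∈ H.edgeSet, HasDomeGadget G 2 (avgK' k) (Pe e) (ep e)
  dome_ve : ∀ (v : V), ∀ e ∈ H.edgeSet, v ∈ e →
    HasDomeGadget G 2 (avgK' k) (Pve v e) (bp v e)
  disj_vv : ∀ v w : V, v ≠ w → Disjoint (Pv v) (Pv w)
  disj_ee : ∀ e ∈ H.edgeSet, ∀ f ∈ H.edgeSet, e ≠ f → Disjoint (Pe e) (Pe f)
  disj_bb : ∀ (v : V), ∀ e ∈ H.edgeSet, v ∈ e → ∀ (w : V), ∀ f ∈ H.edgeSet, w ∈ f →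
    (v, e) ≠ (w, f) → Disjoint (Pve v e) (Pve w f)
  disj_v_e : ∀ (v : V), ∀ e ∈ H.edgeSet, Disjoint (Pv v) (Pe e)
  disj_v_b : ∀ (v w : V), ∀ f ∈ H.edgeSet, w ∈ f → Disjoint (Pv v) (Pve w f)
  disj_e_b : ∀ e ∈ H.edgeSet, ∀ (w : V), ∀ f ∈ H.edgeSet, w ∈ f →
    Disjoint (Pe e) (Pve w f)
  cover : ∀ x : N, (∃ v : V, x ∈ Pv v) ∨ (∃ e ∈ H.edgeSet, x ∈ Pe e) ∨
    (∃ (v : V), ∃ e ∈ H.edgeSet, v ∈ e ∧ x ∈ Pve v e)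
  adj_bv : ∀ (v : V), ∀ e ∈ H.edgeSet, v ∈ e → G.Adj (bp v e) (vp v)
  adj_be : ∀ (v : V), ∀ e ∈ H.edgeSet, v ∈ e → G.Adj (bp v e) (ep e)
  adj_cases : ∀ x y : N, G.Adj x y →
    (∃ v : V, x ∈ Pv v ∧ y ∈ Pv v) ∨
    (∃ e ∈ H.edgeSet, x ∈ Pe e ∧ y ∈ Pe e) ∨
    (∃ (v : V), ∃ e ∈ H.edgeSet, v ∈ e ∧ x ∈ Pve v e ∧ y ∈ Pve v e) ∨
    (∃ (v : V), ∃ e ∈ H.edgeSet, v ∈ e ∧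
      ((x = bp v e ∧ y = vp v) ∨ (y = bp v e ∧ x = vp v))) ∨
    (∃ (v : V), ∃ e ∈ H.edgeSet, v ∈ e ∧
      ((x = bp v e ∧ y = ep e) ∨ (y = bp v e ∧ x = ep e)))
end AHGDefs

section FriendOriented

variable {N : Type*} {G : SimpleGraph N}

lemma mem_friendsIn {C : Finset N} {i j : N} : j ∈ friendsIn G C i ↔ j ∈ C ∧ G.Adj i j :=
  mem_filter

lemma friendsIn_subset (C : Finset N) (i : N) : friendsIn G C i ⊆ C :=
  filter_subset _ _

variable [DecidableEq N]

lemma card_insert_friendsIn (C : Finset N) (i : N) :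
    #(insert i (friendsIn G C i)) = #(friendsIn G C i) + 1 :=
  card_insert_of_notMem fun h => G.irrefl (mem_friendsIn.1 h).2

variable [Fintype N]

lemma fval_le (C : Finset N) (i : N) :
    fval G C i ≤ (Fintype.card N : ℤ) * #(friendsIn G C i) := by
  unfold fval
  linarith [Int.natCast_nonneg #(C.filter fun j => ¬ G.Adj i j ∧ j ≠ i)]

/-- Inside its own coalition a player's enemies are everybody but its friends and itself. -/
lemma fval_eq_of_mem {C : Finset N} {i : N} (hi : i ∈ C) :
    fval G C i = (Fintype.card N + 1 : ℤ) * #(friendsIn G C i) - (#C - 1) := by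
  have henemies : (C.filter fun j => ¬ G.Adj i j ∧ j ≠ i) =
      (C.filter fun j => ¬ G.Adj i j).erase i := by
    ext j
    simp only [mem_filter, mem_erase]
    tauto
  have hsplit := card_filter_add_card_filter_not (s := C) (G.Adj i)
  have hi' : i ∈ C.filter fun j => ¬ G.Adj i j := mem_filter.2 ⟨hi, G.irrefl⟩
  have hpos := card_pos.2 ⟨i, hi'⟩
  rw [fval, henemies, card_erase_of_mem hi', friendsIn]
  push_cast [Nat.cast_sub hpos]
  linarith

lemma fval_eq_of_friendsIn_subset {C P : Finset N} {i : N} (hiC : i ∈ C) (hiP : i ∈ P)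
    (hsub : friendsIn G C i ⊆ P) :
    fval G C i =
      fval G P i + (#P - #C) - (Fintype.card N + 1 : ℤ) * #(friendsIn G P i \ C) := by
  have hinter : friendsIn G P i ∩ C = friendsIn G C i := by
    ext j
    simp only [mem_inter, mem_friendsIn]
    exact ⟨fun h => ⟨h.2, h.1.2⟩, fun h => ⟨⟨hsub (mem_friendsIn.2 h), h.2⟩, h.1⟩⟩
  have hcard := card_sdiff_add_card_inter (friendsIn G P i) C
  rw [hinter] at hcard
  rw [fval_eq_of_mem hiC, fval_eq_of_mem hiP, ← hcard]
  push_cast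
  ring

lemma utilAvgEQ_le_of_forall_le {C : Finset N} {i : N} {M : ℚ}
    (h : ∀ c ∈ insert i (friendsIn G C i), (fval G C c : ℚ) ≤ M) : utilAvgEQ G C i ≤ M := by
  rw [utilAvgEQ, div_le_iff₀ (by positivity), mul_comm, ← nsmul_eq_mul]
  exact sum_le_card_nsmul _ _ _ h

lemma lt_utilAvgEQ_iff {C : Finset N} {i : N} {M : ℚ} :
    M < utilAvgEQ G C i ↔
      M * #(insert i (friendsIn G C i)) < ∑ c ∈ insert i (friendsIn G C i), (fval G C c : ℚ) :=
  lt_div_iff₀ (by positivity)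

/-- When a player's friend group is the same in `P` as in `C`, its gain in average utility
has to outweigh the penalty of `n + 1` for every friendship that the group loses by moving. -/
lemma mul_sum_card_sdiff_lt {C P : Finset N} {i : N} (hiC : i ∈ C) (hiP : i ∈ P)
    (hgroup : insert i (friendsIn G C i) = insert i (friendsIn G P i))
    (hclosed : ∀ c ∈ insert i (friendsIn G P i), friendsIn G C c ⊆ P)
    (h : utilAvgEQ G P i < utilAvgEQ G C i) :
    (Fintype.card N + 1 : ℤ) * ∑ c ∈ insert i (friendsIn G P i), (#(friendsIn G P c \ C) : ℤ)
      < #(insert i (friendsIn G P i)) * (#P - #C) := by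
  set T := insert i (friendsIn G P i)
  have hsum : ∑ c ∈ T, fval G P c < ∑ c ∈ T, fval G C c := by
    rw [utilAvgEQ, utilAvgEQ, hgroup, div_lt_div_iff_of_pos_right (by positivity)] at h
    exact_mod_cast h
  have hTC : T ⊆ C := hgroup ▸ insert_subset hiC (friendsIn_subset C i)
  have hTP : T ⊆ P := insert_subset hiP (friendsIn_subset P i)
  rw [sum_congr rfl fun c hc => fval_eq_of_friendsIn_subset (hTC hc) (hTP hc) (hclosed c hc),
    sum_sub_distrib, sum_add_distrib, sum_const, ← mul_sum, nsmul_eq_mul] at hsum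
  linarith

end FriendOriented

section DomeGadget

variable {N : Type*} [DecidableEq N] {G : SimpleGraph N} {d k' : ℕ} {P : Finset N} {top : N}
  {mid fringe : Fin d → N}

lemma mem_domeBase {x : N} :
    x ∈ domeBase P top mid ↔ x ∈ P ∧ x ≠ top ∧ ∀ i, x ≠ mid i := by
  simp only [domeBase, mem_sdiff, mem_insert, mem_image, mem_univ, true_and, not_or, not_exists]
  exact and_congr_right fun _ => and_congr_right fun _ => forall_congr' fun _ => ne_comm

lemma top_notMem_domeBase : top ∉ domeBase P top mid :=
  fun h => (mem_domeBase.1 h).2.1 rfl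

lemma mid_notMem_domeBase (i : Fin d) : mid i ∉ domeBase P top mid :=
  fun h => (mem_domeBase.1 h).2.2 i rfl

lemma domeBase_subset : domeBase P top mid ⊆ P :=
  sdiff_subset

lemma exists_mem_forall_ne_of_card_lt {D : Finset N} (f : Fin d → N) (h : d < #D) :
    ∃ y ∈ D, ∀ i, y ≠ f i := by
  obtain ⟨y, hy, hy'⟩ := exists_mem_notMem_of_card_lt_card
    ((card_image_le.trans_eq (by simp)).trans_lt h : #(univ.image f) < #D)
  exact ⟨y, hy, fun i h => hy' (h ▸ mem_image_of_mem f (mem_univ i))⟩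

lemma eq_top_or_eq_mid_or_mem_domeBase {x : N} (hx : x ∈ P) :
    x = top ∨ (∃ i, x = mid i) ∨ x ∈ domeBase P top mid := by
  by_cases ht : x = top
  · exact Or.inl ht
  by_cases hm : ∃ i, x = mid i
  · exact Or.inr (Or.inl hm)
  exact Or.inr (Or.inr (mem_domeBase.2 ⟨hx, ht, not_exists.1 hm⟩))

namespace IsDomeGadget

variable (hg : IsDomeGadget G d k' P top mid fringe)
include hg

lemma fringe_ne_top (i : Fin d) : fringe i ≠ top :=
  fun h => top_notMem_domeBase (h ▸ hg.fringe_mem i)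

lemma fringe_ne_mid (i j : Fin d) : fringe i ≠ mid j :=
  fun h => mid_notMem_domeBase j (h ▸ hg.fringe_mem i)

lemma fringe_mem' (i : Fin d) : fringe i ∈ P :=
  domeBase_subset (hg.fringe_mem i)

lemma adj_top_mid (i : Fin d) : G.Adj top (mid i) :=
  (hg.adj_iff _ hg.top_mem _ (hg.mid_mem i)).2 (Or.inl ⟨rfl, i, rfl⟩)

lemma adj_mid_fringe (i : Fin d) : G.Adj (mid i) (fringe i) :=
  (hg.adj_iff _ (hg.mid_mem i) _ (hg.fringe_mem' i)).2
    (Or.inr (Or.inr (Or.inr ⟨i, Or.inl ⟨rfl, rfl⟩⟩)))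

lemma eq_mid_of_adj_top {y : N} (hy : y ∈ P) (h : G.Adj top y) : ∃ i, y = mid i := by
  rcases (hg.adj_iff _ hg.top_mem _ hy).1 h with
    ⟨-, hi⟩ | ⟨rfl, -⟩ | ⟨h1, -⟩ | ⟨i, ⟨h1, -⟩ | ⟨-, h1⟩⟩
  · exact hi
  · exact absurd h G.irrefl
  · exact absurd h1 top_notMem_domeBase
  · exact absurd h1.symm (hg.mid_ne_top i)
  · exact absurd h1.symm (hg.fringe_ne_top i)

lemma card_domeBase : #(domeBase P top mid) + d + 1 = k' := by
  have hsub : insert top (univ.image mid) ⊆ P :=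
    insert_subset hg.top_mem (image_subset_iff.2 fun i _ => hg.mid_mem i)
  have hcard : #(insert top (univ.image mid)) = d + 1 := by
    rw [card_insert_of_notMem, card_image_of_injective _ hg.mid_inj, card_univ, Fintype.card_fin]
    simpa using fun i => hg.mid_ne_top i
  rw [domeBase, card_sdiff_of_subset hsub, hcard, ← hg.card_eq]
  have := card_le_card hsub
  omega

variable (hcl : ∀ x ∈ P, x ≠ top → ∀ y, G.Adj x y → y ∈ P)
include hcl

lemma friendsIn_mid (S : Finset N) (i : Fin d) :
    friendsIn G S (mid i) = S ∩ {top, fringe i} := by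
  ext y
  simp only [mem_friendsIn, mem_inter, mem_insert, mem_singleton]
  refine and_congr_right fun _ => ⟨fun h => ?_, ?_⟩
  · rcases (hg.adj_iff _ (hg.mid_mem i) _ (hcl _ (hg.mid_mem i) (hg.mid_ne_top i) y h)).1 h with
      ⟨h1, _⟩ | ⟨h1, _⟩ | ⟨h1, _⟩ | ⟨j, ⟨h1, h2⟩ | ⟨h1, h2⟩⟩
    · exact absurd h1 (hg.mid_ne_top i)
    · exact Or.inl h1
    · exact absurd h1 (mid_notMem_domeBase i)
    · exact Or.inr (by rw [h2, hg.mid_inj h1])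
    · exact absurd h2.symm (hg.fringe_ne_mid j i)
  · rintro (rfl | rfl)
    · exact (hg.adj_top_mid i).symm
    · exact hg.adj_mid_fringe i

lemma friendsIn_fringe (S : Finset N) (i : Fin d) :
    friendsIn G S (fringe i) = S ∩ insert (mid i) ((domeBase P top mid).erase (fringe i)) := by
  ext y
  simp only [mem_friendsIn, mem_inter, mem_insert, mem_erase]
  refine and_congr_right fun _ => ⟨fun h => ?_, ?_⟩
  · have hy := hcl _ (hg.fringe_mem' i) (hg.fringe_ne_top i) y h
    rcases (hg.adj_iff _ (hg.fringe_mem' i) _ hy).1 h with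
      ⟨h1, _⟩ | ⟨_, j, h2⟩ | ⟨_, h2, h3⟩ | ⟨j, ⟨h1, _⟩ | ⟨h1, h2⟩⟩
    · exact absurd h1 (hg.fringe_ne_top i)
    · exact absurd h2 (hg.fringe_ne_mid i j)
    · exact Or.inr ⟨Ne.symm h3, h2⟩
    · exact absurd h1 (hg.fringe_ne_mid i j)
    · exact Or.inl (by rw [h1, hg.fringe_inj h2])
  · rintro (rfl | ⟨hne, hy⟩)
    · exact (hg.adj_mid_fringe i).symm
    · exact (hg.adj_iff _ (hg.fringe_mem' i) _ (domeBase_subset hy)).2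
        (Or.inr (Or.inr (Or.inl ⟨hg.fringe_mem i, hy, Ne.symm hne⟩)))

lemma friendsIn_of_not_fringe (S : Finset N) {x : N} (hx : x ∈ domeBase P top mid)
    (hxf : ∀ i, x ≠ fringe i) :
    friendsIn G S x = S ∩ (domeBase P top mid).erase x := by
  obtain ⟨hxP, hxt, hxm⟩ := mem_domeBase.1 hx
  ext y
  simp only [mem_friendsIn, mem_inter, mem_erase]
  refine and_congr_right fun _ => ⟨fun h => ?_, fun ⟨hne, hy⟩ => ?_⟩
  · rcases (hg.adj_iff _ hxP _ (hcl x hxP hxt y h)).1 h with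
      ⟨h1, _⟩ | ⟨_, j, h2⟩ | ⟨_, h2, h3⟩ | ⟨j, ⟨h1, _⟩ | ⟨_, h2⟩⟩
    · exact absurd h1 hxt
    · exact absurd h2 (hxm j)
    · exact ⟨Ne.symm h3, h2⟩
    · exact absurd h1 (hxm j)
    · exact absurd h2 (hxf j)
  · exact (hg.adj_iff _ hxP _ (domeBase_subset hy)).2
      (Or.inr (Or.inr (Or.inl ⟨hx, hy, Ne.symm hne⟩)))

lemma insert_friendsIn_fringe {S : Finset N} (i : Fin d)
    (hS : insert (mid i) (domeBase P top mid) ⊆ S) :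
    insert (fringe i) (friendsIn G S (fringe i)) = insert (mid i) (domeBase P top mid) := by
  rw [hg.friendsIn_fringe hcl,
    inter_eq_right.2 ((insert_subset_insert _ (erase_subset _ _)).trans hS), insert_comm,
    insert_erase (hg.fringe_mem i)]

lemma insert_friendsIn_of_not_fringe {S : Finset N} (hS : domeBase P top mid ⊆ S) {x : N}
    (hx : x ∈ domeBase P top mid) (hxf : ∀ i, x ≠ fringe i) :
    insert x (friendsIn G S x) = domeBase P top mid := by
  rw [hg.friendsIn_of_not_fringe hcl S hx hxf, inter_eq_right.2 ((erase_subset _ _).trans hS),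
    insert_erase hx]

lemma card_friendsIn_of_mem_domeBase {c : N} (hc : c ∈ domeBase P top mid) :
    (#(friendsIn G P c) : ℤ) =
      #(domeBase P top mid) - 1 + if ∃ i, c = fringe i then 1 else 0 := by
  have h := card_insert_friendsIn (G := G) P c
  split_ifs with hcf
  · obtain ⟨i, rfl⟩ := hcf
    rw [hg.insert_friendsIn_fringe hcl i (insert_subset (hg.mid_mem i) domeBase_subset),
      card_insert_of_notMem (mid_notMem_domeBase i)] at h
    omega
  · rw [hg.insert_friendsIn_of_not_fringe hcl domeBase_subset hc (not_exists.1 hcf)] at h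
    omega

lemma card_friendsIn_mid_home (i : Fin d) : #(friendsIn G P (mid i)) = 2 := by
  rw [hg.friendsIn_mid hcl, inter_eq_right.2 (insert_subset hg.top_mem
    (singleton_subset_iff.2 (hg.fringe_mem' i))), card_pair (hg.fringe_ne_top i).symm]

variable [Fintype N] {C : Finset N}

omit hcl in
lemma fval_home {c : N} (hc : c ∈ P) :
    (fval G P c : ℚ) = (Fintype.card N + 1) * #(friendsIn G P c) - (k' - 1) := by
  have h := fval_eq_of_mem (G := G) hc
  rw [hg.card_eq] at h
  exact_mod_cast h

lemma sum_fval_domeBase_home :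
    ∑ c ∈ domeBase P top mid, (fval G P c : ℚ) =
      #(domeBase P top mid) * ((Fintype.card N + 1) * (#(domeBase P top mid) - 1) - (k' - 1))
        + (Fintype.card N + 1) * d := by
  have hfringes :
      (domeBase P top mid).filter (fun c => ∃ i, c = fringe i) = univ.image fringe := by
    ext c
    simp only [mem_filter, mem_image, mem_univ, true_and]
    exact ⟨fun ⟨_, i, hi⟩ => ⟨i, hi.symm⟩, fun ⟨i, hi⟩ => ⟨hi ▸ hg.fringe_mem i, i, hi.symm⟩⟩
  have hterm : ∀ c ∈ domeBase P top mid, (fval G P c : ℚ) =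
      ((Fintype.card N + 1) * (#(domeBase P top mid) - 1) - (k' - 1))
        + (Fintype.card N + 1) * if ∃ i, c = fringe i then 1 else 0 := by
    intro c hc
    rw [hg.fval_home (domeBase_subset hc)]
    have h := congrArg (Int.cast : ℤ → ℚ) (hg.card_friendsIn_of_mem_domeBase hcl hc)
    push_cast at h
    rw [h]
    ring
  rw [sum_congr rfl hterm, sum_add_distrib, sum_const, ← mul_sum, sum_boole, hfringes,
    card_image_of_injective _ hg.fringe_inj, card_univ, Fintype.card_fin, nsmul_eq_mul]

lemma lt_utilAvgEQ_home_of_not_fringe (hd : 1 ≤ d) (hn : k' * (d + 1) < Fintype.card N)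
    {y : N} (hy : y ∈ domeBase P top mid) (hyf : ∀ i, y ≠ fringe i) :
    Fintype.card N * (#(domeBase P top mid) - 1 : ℚ) < utilAvgEQ G P y := by
  rw [lt_utilAvgEQ_iff, hg.insert_friendsIn_of_not_fringe hcl domeBase_subset hy hyf,
    hg.sum_fval_domeBase_home hcl]
  have hm : (#(domeBase P top mid) + d + 1 : ℚ) = k' := by exact_mod_cast hg.card_domeBase
  have hdq : (1 : ℚ) ≤ d := by exact_mod_cast hd
  have hnq : (k' * (d + 1) : ℚ) < Fintype.card N := by exact_mod_cast hn
  nlinarith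

lemma lt_utilAvgEQ_home_fringe (hn : k' * (d + 1) < Fintype.card N) (i : Fin d) :
    Fintype.card N * (#(domeBase P top mid) - 2 : ℚ) < utilAvgEQ G P (fringe i) := by
  rw [lt_utilAvgEQ_iff,
    hg.insert_friendsIn_fringe hcl i (insert_subset (hg.mid_mem i) domeBase_subset),
    sum_insert (mid_notMem_domeBase i), card_insert_of_notMem (mid_notMem_domeBase i),
    hg.sum_fval_domeBase_home hcl, hg.fval_home (hg.mid_mem i), hg.card_friendsIn_mid_home hcl]
  have hm : (#(domeBase P top mid) + d + 1 : ℚ) = k' := by exact_mod_cast hg.card_domeBase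
  have hnq : (k' * (d + 1) : ℚ) < Fintype.card N := by exact_mod_cast hn
  push_cast
  nlinarith

lemma fval_le_of_mem_domeBase {c : N} (hc : c ∈ domeBase P top mid) (hcC : c ∈ C) :
    (fval G C c : ℚ) ≤ Fintype.card N * #(domeBase P top mid ∩ C) := by
  -- `z` is the mid player attached to `c` if `c` is a fringe player, and `c` itself otherwise
  obtain ⟨z, hz⟩ : ∃ z, friendsIn G C c ⊆ insert z ((domeBase P top mid ∩ C).erase c) := by
    by_cases hcf : ∃ i, c = fringe i
    · obtain ⟨i, rfl⟩ := hcf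
      refine ⟨mid i, fun y hy => ?_⟩
      rw [hg.friendsIn_fringe hcl] at hy
      simp only [mem_inter, mem_insert, mem_erase] at hy ⊢
      tauto
    · refine ⟨c, fun y hy => ?_⟩
      rw [hg.friendsIn_of_not_fringe hcl C hc (not_exists.1 hcf)] at hy
      simp only [mem_inter, mem_insert, mem_erase] at hy ⊢
      tauto
  have hcard : #(friendsIn G C c) ≤ #(domeBase P top mid ∩ C) := by
    have := (card_le_card hz).trans (card_insert_le _ _)
    rw [card_erase_of_mem (mem_inter.2 ⟨hc, hcC⟩)] at this
    have := card_pos.2 ⟨c, mem_inter.2 ⟨hc, hcC⟩⟩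
    omega
  calc (fval G C c : ℚ) ≤ Fintype.card N * #(friendsIn G C c) := by exact_mod_cast fval_le C c
    _ ≤ _ := by gcongr

lemma utilAvgEQ_le_of_not_fringe {y : N} (hy : y ∈ domeBase P top mid) (hyC : y ∈ C)
    (hyf : ∀ i, y ≠ fringe i) :
    utilAvgEQ G C y ≤ Fintype.card N * #(domeBase P top mid ∩ C) := by
  refine utilAvgEQ_le_of_forall_le fun c hc => ?_
  rw [hg.friendsIn_of_not_fringe hcl C hy hyf, mem_insert, mem_inter, mem_erase] at hc
  rcases hc with rfl | ⟨hcC, -, hcB⟩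
  · exact hg.fval_le_of_mem_domeBase hcl hy hyC
  · exact hg.fval_le_of_mem_domeBase hcl hcB hcC

lemma utilAvgEQ_fringe_le (i : Fin d) (hiC : fringe i ∈ C) :
    utilAvgEQ G C (fringe i) ≤ Fintype.card N * (#(domeBase P top mid ∩ C) + 1) := by
  have hs : (1 : ℚ) ≤ #(domeBase P top mid ∩ C) := by
    exact_mod_cast card_pos.2 ⟨_, mem_inter.2 ⟨hg.fringe_mem i, hiC⟩⟩
  have hn : (0 : ℚ) ≤ Fintype.card N := by positivity
  refine utilAvgEQ_le_of_forall_le fun c hc => ?_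
  rw [hg.friendsIn_fringe hcl, mem_insert, mem_inter, mem_insert, mem_erase] at hc
  rcases hc with rfl | ⟨hcC, rfl | ⟨-, hcB⟩⟩
  · nlinarith [hg.fval_le_of_mem_domeBase hcl (hg.fringe_mem i) hiC]
  · have hmid : #(friendsIn G C (mid i)) ≤ 2 := by
      rw [hg.friendsIn_mid hcl]
      exact (card_le_card inter_subset_right).trans card_le_two
    have hmid' : (#(friendsIn G C (mid i)) : ℚ) ≤ 2 := by exact_mod_cast hmid
    have : (fval G C (mid i) : ℚ) ≤ Fintype.card N * #(friendsIn G C (mid i)) := by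
      exact_mod_cast fval_le C (mid i)
    nlinarith
  · nlinarith [hg.fval_le_of_mem_domeBase hcl hcB hcC]

lemma domeBase_subset_of_blocks (hd : 1 ≤ d) (hk' : 2 * d + 4 ≤ k')
    (hn : k' * (d + 1) < Fintype.card N)
    (hblk : ∀ x ∈ C, x ∈ P → utilAvgEQ G P x < utilAvgEQ G C x)
    {x : N} (hx : x ∈ domeBase P top mid) (hxC : x ∈ C) : domeBase P top mid ⊆ C := by
  have hm := hg.card_domeBase
  have hnpos : (0 : ℚ) < Fintype.card N := by exact_mod_cast (Nat.zero_le _).trans_lt hn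
  obtain ⟨y, hyBC, hyf⟩ : ∃ y ∈ domeBase P top mid ∩ C, ∀ i, y ≠ fringe i := by
    by_cases hxf : ∀ i, x ≠ fringe i
    · exact ⟨x, mem_inter.2 ⟨hx, hxC⟩, hxf⟩
    obtain ⟨i, rfl⟩ := not_forall_not.1 hxf
    have hlt := ((hg.lt_utilAvgEQ_home_fringe hcl hn i).trans
      (hblk _ hxC (hg.fringe_mem' i))).trans_le (hg.utilAvgEQ_fringe_le hcl i hxC)
    have hs : (#(domeBase P top mid) : ℚ) < #(domeBase P top mid ∩ C) + 3 := by
      nlinarith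
    have hs : d < #(domeBase P top mid ∩ C) := by
      have : #(domeBase P top mid) < #(domeBase P top mid ∩ C) + 3 := by exact_mod_cast hs
      omega
    exact exists_mem_forall_ne_of_card_lt fringe hs
  obtain ⟨hyB, hyC⟩ := mem_inter.1 hyBC
  have hlt := ((hg.lt_utilAvgEQ_home_of_not_fringe hcl hd hn hyB hyf).trans
    (hblk y hyC (domeBase_subset hyB))).trans_le (hg.utilAvgEQ_le_of_not_fringe hcl hyB hyC hyf)
  have hs : (#(domeBase P top mid) : ℚ) < #(domeBase P top mid ∩ C) + 1 := by nlinarith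
  have hs : #(domeBase P top mid) ≤ #(domeBase P top mid ∩ C) := by
    have : #(domeBase P top mid) < #(domeBase P top mid ∩ C) + 1 := by exact_mod_cast hs
    omega
  exact inter_eq_left.1 (eq_of_subset_of_card_le inter_subset_left hs)

lemma mul_sum_card_sdiff_lt_of_not_fringe
    (hblk : ∀ x ∈ C, x ∈ P → utilAvgEQ G P x < utilAvgEQ G C x)
    (hBC : domeBase P top mid ⊆ C) {y : N} (hy : y ∈ domeBase P top mid)
    (hyf : ∀ i, y ≠ fringe i) :
    (Fintype.card N + 1 : ℤ) * ∑ c ∈ domeBase P top mid, (#(friendsIn G P c \ C) : ℤ) <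
      #(domeBase P top mid) * (k' - #C) := by
  have hgroup := hg.insert_friendsIn_of_not_fringe hcl domeBase_subset hy hyf
  have h := mul_sum_card_sdiff_lt (hBC hy) (domeBase_subset hy)
    ((hg.insert_friendsIn_of_not_fringe hcl hBC hy hyf).trans hgroup.symm) ?_
    (hblk y (hBC hy) (domeBase_subset hy))
  · rwa [hgroup, hg.card_eq] at h
  · rw [hgroup]
    exact fun c hc z hz => hcl c (domeBase_subset hc) (fun h => top_notMem_domeBase (h ▸ hc)) z
      (mem_friendsIn.1 hz).2

lemma mul_sum_card_sdiff_lt_fringe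
    (hblk : ∀ x ∈ C, x ∈ P → utilAvgEQ G P x < utilAvgEQ G C x) (i : Fin d)
    (hTC : insert (mid i) (domeBase P top mid) ⊆ C) :
    (Fintype.card N + 1 : ℤ) *
        ∑ c ∈ insert (mid i) (domeBase P top mid), (#(friendsIn G P c \ C) : ℤ) <
      (#(domeBase P top mid) + 1) * (k' - #C) := by
  have hTP := insert_subset (hg.mid_mem i) (domeBase_subset (top := top) (mid := mid))
  have hgroup := hg.insert_friendsIn_fringe hcl i hTP
  have hiC := hTC (mem_insert_of_mem (hg.fringe_mem i))
  have h := mul_sum_card_sdiff_lt hiC (hg.fringe_mem' i)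
    ((hg.insert_friendsIn_fringe hcl i hTC).trans hgroup.symm) ?_ (hblk _ hiC (hg.fringe_mem' i))
  · rw [hgroup, card_insert_of_notMem (mid_notMem_domeBase i), hg.card_eq] at h
    exact_mod_cast h
  · rw [hgroup]
    intro c hc z hz
    refine hcl c (hTP hc) ?_ z (mem_friendsIn.1 hz).2
    rcases mem_insert.1 hc with rfl | hc
    exacts [hg.mid_ne_top i, fun h => top_notMem_domeBase (h ▸ hc)]

lemma mid_mem_of_domeBase_subset (hk' : 2 * d + 4 ≤ k') (hn : k' * (d + 1) < Fintype.card N)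
    (hblk : ∀ x ∈ C, x ∈ P → utilAvgEQ G P x < utilAvgEQ G C x)
    (hBC : domeBase P top mid ⊆ C) (i : Fin d) : mid i ∈ C := by
  by_contra hi
  have hm := hg.card_domeBase
  obtain ⟨y, hy, hyf⟩ :=
    exists_mem_forall_ne_of_card_lt fringe (by omega : d < #(domeBase P top mid))
  have h := hg.mul_sum_card_sdiff_lt_of_not_fringe hcl hblk hBC hy hyf
  have hlost : 1 ≤ ∑ c ∈ domeBase P top mid, (#(friendsIn G P c \ C) : ℤ) := by
    refine le_trans ?_ (single_le_sum (fun _ _ => by positivity) (hg.fringe_mem i))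
    exact_mod_cast card_pos.2 ⟨mid i, mem_sdiff.2 ⟨mem_friendsIn.2
      ⟨hg.mid_mem i, (hg.adj_mid_fringe i).symm⟩, hi⟩⟩
  have hC : #(domeBase P top mid) ≤ #C := card_le_card hBC
  nlinarith

lemma disjoint_domeBase_of_blocks (hd : 1 ≤ d) (hk' : 2 * d + 4 ≤ k')
    (hn : k' * (d + 1) < Fintype.card N)
    (hblk : ∀ x ∈ C, x ∈ P → utilAvgEQ G P x < utilAvgEQ G C x) :
    Disjoint (domeBase P top mid) C := by
  refine disjoint_left.2 fun x hx hxC => ?_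
  have hm := hg.card_domeBase
  have hBC := hg.domeBase_subset_of_blocks hcl hd hk' hn hblk hx hxC
  have hmids := hg.mid_mem_of_domeBase_subset hcl hk' hn hblk hBC
  let i : Fin d := ⟨0, hd⟩
  have h := hg.mul_sum_card_sdiff_lt_fringe hcl hblk i (insert_subset (hmids i) hBC)
  have hlost : 0 ≤ ∑ c ∈ insert (mid i) (domeBase P top mid), (#(friendsIn G P c \ C) : ℤ) :=
    sum_nonneg fun _ _ => by positivity
  by_cases htop : top ∈ C
  · have hPC : P ⊆ C := fun z hz => by
      rcases eq_top_or_eq_mid_or_mem_domeBase (top := top) (mid := mid) hz with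
        rfl | ⟨j, rfl⟩ | hzB
      exacts [htop, hmids j, hBC hzB]
    have hPC := card_le_card hPC
    rw [hg.card_eq] at hPC
    nlinarith
  · have hlost :
        1 ≤ ∑ c ∈ insert (mid i) (domeBase P top mid), (#(friendsIn G P c \ C) : ℤ) := by
      refine le_trans ?_ (single_le_sum (fun _ _ => by positivity) (mem_insert_self _ _))
      exact_mod_cast card_pos.2 ⟨top, mem_sdiff.2 ⟨mem_friendsIn.2
        ⟨hg.top_mem, (hg.adj_top_mid i).symm⟩, htop⟩⟩
    have hC : #(domeBase P top mid) ≤ #C := card_le_card hBC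
    have hk'C : (k' : ℤ) - #C ≤ d + 1 := by omega
    have hmk' : (#(domeBase P top mid) : ℤ) + 1 ≤ k' := by omega
    have hn' : (k' * (d + 1) : ℤ) < Fintype.card N := by exact_mod_cast hn
    nlinarith [mul_le_mul_of_nonneg_left hk'C
      (by positivity : (0 : ℤ) ≤ #(domeBase P top mid) + 1),
      mul_le_mul_of_nonneg_right hmk' (by positivity : (0 : ℤ) ≤ d + 1)]

lemma lt_utilAvgEQ_home_mid (hk' : d + 12 ≤ k') (hn : 3 * k' < Fintype.card N) (i : Fin d) :
    4 * Fintype.card N < utilAvgEQ G P (mid i) := by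
  have hm : (#(domeBase P top mid) + d + 1 : ℚ) = k' := by exact_mod_cast hg.card_domeBase
  have hnq : (3 * k' : ℚ) < Fintype.card N := by exact_mod_cast hn
  have hk'q : (d + 12 : ℚ) ≤ k' := by exact_mod_cast hk'
  have hfringe := congrArg (Int.cast : ℤ → ℚ)
    (hg.card_friendsIn_of_mem_domeBase hcl (hg.fringe_mem i))
  rw [if_pos ⟨i, rfl⟩] at hfringe
  push_cast at hfringe
  have hne : mid i ∉ ({top, fringe i} : Finset N) := by
    simpa using ⟨hg.mid_ne_top i, (hg.fringe_ne_mid i i).symm⟩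
  rw [lt_utilAvgEQ_iff, hg.friendsIn_mid hcl, inter_eq_right.2 (insert_subset hg.top_mem
      (singleton_subset_iff.2 (hg.fringe_mem' i))), sum_insert hne,
    sum_pair (hg.fringe_ne_top i).symm, card_insert_of_notMem hne,
    card_pair (hg.fringe_ne_top i).symm, hg.fval_home (hg.mid_mem i), hg.fval_home hg.top_mem,
    hg.fval_home (hg.fringe_mem' i), hg.card_friendsIn_mid_home hcl, hfringe]
  have : (0 : ℚ) ≤ #(friendsIn G P top) := by positivity
  push_cast
  nlinarith

lemma utilAvgEQ_mid_le (htop : #(friendsIn G C top) ≤ 4) (i : Fin d) (hi : fringe i ∉ C) :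
    utilAvgEQ G C (mid i) ≤ 4 * Fintype.card N := by
  refine utilAvgEQ_le_of_forall_le fun c hc => ?_
  rw [hg.friendsIn_mid hcl, mem_insert, mem_inter, mem_insert, mem_singleton] at hc
  have hcard : #(friendsIn G C c) ≤ 4 := by
    rcases hc with rfl | ⟨hcC, rfl | rfl⟩
    · rw [hg.friendsIn_mid hcl]
      exact (card_le_card inter_subset_right).trans (card_le_two.trans (by norm_num))
    · exact htop
    · exact absurd hcC hi
  have : fval G C c ≤ Fintype.card N * 4 :=
    (fval_le C c).trans (by gcongr; exact_mod_cast hcard)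
  have : (fval G C c : ℚ) ≤ Fintype.card N * 4 := by exact_mod_cast this
  linarith

lemma mid_notMem_of_blocks (hk' : d + 12 ≤ k') (hn : 3 * k' < Fintype.card N)
    (htop : #(friendsIn G C top) ≤ 4) (hB : Disjoint (domeBase P top mid) C)
    (hblk : ∀ x ∈ C, x ∈ P → utilAvgEQ G P x < utilAvgEQ G C x) (i : Fin d) : mid i ∉ C :=
  fun hiC => ((hg.lt_utilAvgEQ_home_mid hcl hk' hn i).trans (hblk _ hiC (hg.mid_mem i))).not_ge
    (hg.utilAvgEQ_mid_le hcl htop i (disjoint_left.1 hB (hg.fringe_mem i)))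

lemma eq_top_or_adj_top_of_blocks (hd : 1 ≤ d) (hk' : 2 * d + 4 ≤ k')
    (hn : k' * (d + 1) < Fintype.card N)
    (hblk : ∀ x ∈ C, x ∈ P → utilAvgEQ G P x < utilAvgEQ G C x) {x : N} (hxP : x ∈ P)
    (hxC : x ∈ C) : x = top ∨ G.Adj top x := by
  rcases eq_top_or_eq_mid_or_mem_domeBase (top := top) (mid := mid) hxP with h | ⟨i, rfl⟩ | hx
  · exact Or.inl h
  · exact Or.inr (hg.adj_top_mid i)
  · exact absurd hxC (disjoint_left.1 (hg.disjoint_domeBase_of_blocks hcl hd hk' hn hblk) hx)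

lemma eq_top_of_blocks (hd : 2 ≤ d) (hk' : 2 * d + 12 ≤ k') (hn : k' * (d + 1) < Fintype.card N)
    (htop : #(friendsIn G C top) ≤ 4)
    (hblk : ∀ x ∈ C, x ∈ P → utilAvgEQ G P x < utilAvgEQ G C x) {x : N} (hxP : x ∈ P)
    (hxC : x ∈ C) : x = top := by
  have hB := hg.disjoint_domeBase_of_blocks hcl (by omega) (by omega) hn hblk
  rcases eq_top_or_eq_mid_or_mem_domeBase (top := top) (mid := mid) hxP with h | ⟨i, rfl⟩ | hx
  · exact h
  · exact absurd hxC (hg.mid_notMem_of_blocks hcl (by omega) (by nlinarith) htop hB hblk i)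
  · exact absurd hxC (disjoint_left.1 hB hx)

end IsDomeGadget

end DomeGadget

lemma two_mul_add_twelve_le_avgK' {k : ℕ} (hk : 4 ≤ k) : 2 * k + 12 ≤ avgK' k := by
  have h : 2 * k - 2 ≤ k.choose 2 := by
    rw [Nat.choose_two_right, Nat.le_div_iff_mul_le two_pos]
    obtain ⟨j, rfl⟩ := Nat.exists_eq_add_of_le hk
    simp only [show 4 + j - 1 = 3 + j by omega,
      show 2 * (4 + j) - 2 = 6 + 2 * j by omega]
    nlinarith
  unfold avgK'
  omega

section Reduction

variable {V N : Type*} [DecidableEq N] {H : SimpleGraph V} {k : ℕ} {G : SimpleGraph N}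
  {Pv : V → Finset N} {Pe : Sym2 V → Finset N} {Pve : V → Sym2 V → Finset N}
  {vp : V → N} {ep : Sym2 V → N} {bp : V → Sym2 V → N}

def avgGadgets (H : SimpleGraph V) (Pv : V → Finset N) (Pe : Sym2 V → Finset N)
    (Pve : V → Sym2 V → Finset N) (vp : V → N) (ep : Sym2 V → N) (bp : V → Sym2 V → N) :
    Set (Finset N × N) :=
  {g | (∃ v, g = (Pv v, vp v)) ∨ (∃ e ∈ H.edgeSet, g = (Pe e, ep e)) ∨
    ∃ v, ∃ e ∈ H.edgeSet, v ∈ e ∧ g = (Pve v e, bp v e)}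

namespace AvgEQReduction

variable (R : AvgEQReduction H k G Pv Pe Pve vp ep bp)
include R

lemma vp_mem (v : V) : vp v ∈ Pv v :=
  let ⟨_, _, hg⟩ := R.dome_v v; hg.top_mem

lemma ep_mem {e : Sym2 V} (he : e ∈ H.edgeSet) : ep e ∈ Pe e :=
  let ⟨_, _, hg⟩ := R.dome_e e he; hg.top_mem

lemma bp_mem {v : V} {e : Sym2 V} (he : e ∈ H.edgeSet) (hve : v ∈ e) : bp v e ∈ Pve v e :=
  let ⟨_, _, hg⟩ := R.dome_ve v e he hve; hg.top_mem

lemma top_mem {g : Finset N × N} (hg : g ∈ avgGadgets H Pv Pe Pve vp ep bp) : g.2 ∈ g.1 := by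
  rcases hg with ⟨v, rfl⟩ | ⟨e, he, rfl⟩ | ⟨v, e, he, hve, rfl⟩
  exacts [R.vp_mem v, R.ep_mem he, R.bp_mem he hve]

lemma eq_of_mem_of_mem {g g' : Finset N × N} (hg : g ∈ avgGadgets H Pv Pe Pve vp ep bp)
    (hg' : g' ∈ avgGadgets H Pv Pe Pve vp ep bp) {x : N} (hx : x ∈ g.1) (hx' : x ∈ g'.1) :
    g = g' := by
  have key {s t : Finset N} (h : Disjoint s t) (hs : x ∈ s) (ht : x ∈ t) : False :=
    disjoint_left.1 h hs ht
  rcases hg with ⟨v, rfl⟩ | ⟨e, he, rfl⟩ | ⟨v, e, he, hve, rfl⟩ <;>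
    rcases hg' with ⟨w, rfl⟩ | ⟨f, hf, rfl⟩ | ⟨w, f, hf, hwf, rfl⟩
  · by_cases hvw : v = w
    · rw [hvw]
    · exact (key (R.disj_vv v w hvw) hx hx').elim
  · exact (key (R.disj_v_e v f hf) hx hx').elim
  · exact (key (R.disj_v_b v w f hf hwf) hx hx').elim
  · exact (key (R.disj_v_e w e he) hx' hx).elim
  · by_cases hef : e = f
    · rw [hef]
    · exact (key (R.disj_ee e he f hf hef) hx hx').elim
  · exact (key (R.disj_e_b e he w f hf hwf) hx hx').elim
  · exact (key (R.disj_v_b w v e he hve) hx' hx).elim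
  · exact (key (R.disj_e_b f hf v e he hve) hx' hx).elim
  · by_cases hvw : (v, e) = (w, f)
    · simp only [Prod.mk.injEq] at hvw
      rw [hvw.1, hvw.2]
    · exact (key (R.disj_bb v e he hve w f hf hwf hvw) hx hx').elim

lemma adj_cases_avgGadgets {x y : N} (h : G.Adj x y) :
    (∃ g ∈ avgGadgets H Pv Pe Pve vp ep bp, x ∈ g.1 ∧ y ∈ g.1) ∨
      ∃ v, ∃ e ∈ H.edgeSet, v ∈ e ∧
        ((x = bp v e ∧ (y = vp v ∨ y = ep e)) ∨ (y = bp v e ∧ (x = vp v ∨ x = ep e))) := by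
  rcases R.adj_cases x y h with ⟨v, hx, hy⟩ | ⟨e, he, hx, hy⟩ | ⟨v, e, he, hve, hx, hy⟩ |
    ⟨v, e, he, hve, h⟩ | ⟨v, e, he, hve, h⟩
  · exact Or.inl ⟨_, Or.inl ⟨v, rfl⟩, hx, hy⟩
  · exact Or.inl ⟨_, Or.inr (Or.inl ⟨e, he, rfl⟩), hx, hy⟩
  · exact Or.inl ⟨_, Or.inr (Or.inr ⟨v, e, he, hve, rfl⟩), hx, hy⟩
  · exact Or.inr ⟨v, e, he, hve, by tauto⟩
  · exact Or.inr ⟨v, e, he, hve, by tauto⟩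

lemma mem_of_adj_of_ne_top {P : Finset N} {top : N}
    (hg : (P, top) ∈ avgGadgets H Pv Pe Pve vp ep bp) :
    ∀ x ∈ P, x ≠ top → ∀ y, G.Adj x y → y ∈ P := by
  intro x hx hxt y h
  have top_ne {g : Finset N × N} (hg' : g ∈ avgGadgets H Pv Pe Pve vp ep bp) (hx' : x = g.2) :
      False :=
    hxt (hx' ▸ congrArg Prod.snd (R.eq_of_mem_of_mem hg' hg (R.top_mem hg') (hx' ▸ hx)))
  rcases R.adj_cases_avgGadgets h with
    ⟨g, hg', hxg, hyg⟩ | ⟨v, e, he, hve, ⟨hxb, -⟩ | ⟨-, hxv | hxe⟩⟩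
  · exact (R.eq_of_mem_of_mem hg' hg hxg hx ▸ hyg :)
  · exact (top_ne (Or.inr (Or.inr ⟨v, e, he, hve, rfl⟩)) hxb).elim
  · exact (top_ne (Or.inl ⟨v, rfl⟩) hxv).elim
  · exact (top_ne (Or.inr (Or.inl ⟨e, he, rfl⟩)) hxe).elim

lemma ep_ne_vp {e : Sym2 V} (he : e ∈ H.edgeSet) (v : V) : ep e ≠ vp v :=
  (disjoint_iff_ne.1 (R.disj_v_e v e he) _ (R.vp_mem v) _ (R.ep_mem he)).symm

lemma bp_ne_vp {w : V} {f : Sym2 V} (hf : f ∈ H.edgeSet) (hwf : w ∈ f) (v : V) : bp w f ≠ vp v :=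
  (disjoint_iff_ne.1 (R.disj_v_b v w f hf hwf) _ (R.vp_mem v) _ (R.bp_mem hf hwf)).symm

lemma bp_ne_ep {w : V} {f e : Sym2 V} (hf : f ∈ H.edgeSet) (hwf : w ∈ f) (he : e ∈ H.edgeSet) :
    bp w f ≠ ep e :=
  (disjoint_iff_ne.1 (R.disj_e_b e he w f hf hwf) _ (R.ep_mem he) _ (R.bp_mem hf hwf)).symm

lemma ep_injOn {e f : Sym2 V} (he : e ∈ H.edgeSet) (hf : f ∈ H.edgeSet) (h : ep e = ep f) :
    e = f := by
  by_contra hef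
  exact disjoint_iff_ne.1 (R.disj_ee e he f hf hef) _ (R.ep_mem he) _ (R.ep_mem hf) h

lemma bp_injOn {v w : V} {e f : Sym2 V} (he : e ∈ H.edgeSet) (hve : v ∈ e) (hf : f ∈ H.edgeSet)
    (hwf : w ∈ f) (h : bp v e = bp w f) : v = w ∧ e = f := by
  by_contra hvw
  exact disjoint_iff_ne.1 (R.disj_bb v e he hve w f hf hwf (by simpa using hvw)) _
    (R.bp_mem he hve) _ (R.bp_mem hf hwf) h

lemma card_friendsIn_ep_le {e : Sym2 V} (he : e ∈ H.edgeSet) (C : Finset N) :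
    #(friendsIn G C (ep e)) ≤ 4 := by
  obtain ⟨mid, fringe, hg⟩ := R.dome_e e he
  induction e using Sym2.ind with | _ a b => ?_
  refine (card_le_card fun y hy => ?_).trans
    (card_le_four (a := mid 0) (b := mid 1) (c := bp a s(a, b)) (d := bp b s(a, b)))
  have hadj := (mem_friendsIn.1 hy).2
  rcases R.adj_cases_avgGadgets hadj with
    ⟨g, hg', hxg, hyg⟩ | ⟨v, f, hf, hvf, ⟨hxb, -⟩ | ⟨rfl, hxv | hxe⟩⟩
  · rw [R.eq_of_mem_of_mem hg' (Or.inr (Or.inl ⟨_, he, rfl⟩)) hxg (R.ep_mem he)] at hyg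
    obtain ⟨j, rfl⟩ := hg.eq_mid_of_adj_top hyg hadj
    fin_cases j <;> simp
  · exact absurd hxb.symm (R.bp_ne_ep hf hvf he)
  · exact absurd hxv (R.ep_ne_vp he v)
  · obtain rfl := R.ep_injOn hf he hxe.symm
    rcases Sym2.mem_iff.1 hvf with rfl | rfl <;> simp

lemma card_friendsIn_bp_le {v : V} {e : Sym2 V} (he : e ∈ H.edgeSet) (hve : v ∈ e)
    (C : Finset N) : #(friendsIn G C (bp v e)) ≤ 4 := by
  obtain ⟨mid, fringe, hg⟩ := R.dome_ve v e he hve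
  refine (card_le_card fun y hy => ?_).trans
    (card_le_four (a := mid 0) (b := mid 1) (c := vp v) (d := ep e))
  have hadj := (mem_friendsIn.1 hy).2
  rcases R.adj_cases_avgGadgets hadj with
    ⟨g, hg', hxg, hyg⟩ | ⟨w, f, hf, hwf, ⟨hxb, hy⟩ | ⟨rfl, hxv | hxe⟩⟩
  · rw [R.eq_of_mem_of_mem hg' (Or.inr (Or.inr ⟨v, e, he, hve, rfl⟩)) hxg (R.bp_mem he hve)] at hyg
    obtain ⟨j, rfl⟩ := hg.eq_mid_of_adj_top hyg hadj
    fin_cases j <;> simp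
  · obtain ⟨rfl, rfl⟩ := R.bp_injOn he hve hf hwf hxb
    rcases hy with rfl | rfl <;> simp
  · exact absurd hxv (R.bp_ne_vp he hve w)
  · exact absurd hxe (R.bp_ne_ep he hve hf)

lemma card_add_card_mul_le [Fintype V] [Fintype N] :
    (Fintype.card V + #H.edgeFinset) * avgK' k ≤ Fintype.card N := by
  have hcard_v (v : V) : #(Pv v) = avgK' k :=
    let ⟨_, _, hg⟩ := R.dome_v v; hg.card_eq
  have hcard_e (e : Sym2 V) (he : e ∈ H.edgeFinset) : #(Pe e) = avgK' k :=
    let ⟨_, _, hg⟩ := R.dome_e e (SimpleGraph.mem_edgeFinset.1 he); hg.card_eq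
  have hdisj : Disjoint (univ.biUnion Pv) (H.edgeFinset.biUnion Pe) := by
    simp only [disjoint_biUnion_left, disjoint_biUnion_right]
    exact fun e he v _ => R.disj_v_e v e (SimpleGraph.mem_edgeFinset.1 he)
  calc (Fintype.card V + #H.edgeFinset) * avgK' k
      = #(univ.biUnion Pv ∪ H.edgeFinset.biUnion Pe) := by
        rw [card_union_of_disjoint hdisj,
          card_biUnion fun v _ w _ hvw => R.disj_vv v w hvw,
          card_biUnion fun e he f hf hef => R.disj_ee e (SimpleGraph.mem_edgeFinset.1 he) f
            (SimpleGraph.mem_edgeFinset.1 hf) hef,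
          sum_congr rfl fun v _ => hcard_v v, sum_congr rfl hcard_e,
          sum_const, sum_const, card_univ, smul_eq_mul, smul_eq_mul]
        ring
    _ ≤ Fintype.card N := card_le_univ _

end AvgEQReduction

end Reduction

/-- In the avg-EQ reduction instance, every member of a coalition `C` blocking `Γ`
is a vertex player, an edge player, an incidence player, or a mid player of a vertex
gadget (i.e. a neighbor of some `vp v` inside `Pv v`); in particular `C` contains no
base-clique players and no mid players of edge or incidence gadgets. -/
theorem avgEQ_blocking_members {V N : Type*} [Fintype V] [DecidableEq V]
    [Fintype N] [DecidableEq N]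
    (H : SimpleGraph V) (k : ℕ) (hk : 4 ≤ k)
    (hsize : k ^ 2 ≤ Fintype.card V + H.edgeFinset.card)
    (G : SimpleGraph N) (Pv : V → Finset N) (Pe : Sym2 V → Finset N)
    (Pve : V → Sym2 V → Finset N)
    (vp : V → N) (ep : Sym2 V → N) (bp : V → Sym2 V → N)
    (R : AvgEQReduction H k G Pv Pe Pve vp ep bp)
    (Γ : CoalitionStructure N) (hΓ : IsAvgGamma H Pv Pe Pve Γ)
    (C : Finset N) (hC : Blocks (utilAvgEQ G) Γ C) :
    ∀ i ∈ C, (∃ v : V, i = vp v) ∨ (∃ e ∈ H.edgeSet, i = ep e) ∨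
      (∃ (v : V), ∃ e ∈ H.edgeSet, v ∈ e ∧ i = bp v e) ∨
      (∃ v : V, i ∈ Pv v ∧ G.Adj (vp v) i) := by
  intro i hi
  have hk' := two_mul_add_twelve_le_avgK' hk
  have hN := (Nat.mul_le_mul_right (avgK' k) hsize).trans R.card_add_card_mul_le
  have hkN : avgK' k * (k - 1 + 1) < Fintype.card N := by
    rw [Nat.sub_add_cancel (by omega : 1 ≤ k)]
    nlinarith
  have h3N : avgK' k * (2 + 1) < Fintype.card N := by
    nlinarith [Nat.mul_le_mul_right (avgK' k) (show 16 ≤ k ^ 2 by nlinarith)]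
  have hblk {P : Finset N} (hP : ∀ x ∈ P, Γ.part x = P) :
      ∀ x ∈ C, x ∈ P → utilAvgEQ G P x < utilAvgEQ G C x :=
    fun x hx hxP => hP x hxP ▸ hC.2 x hx
  obtain ⟨hΓv, hΓe, hΓve⟩ := hΓ
  rcases R.cover i with ⟨v, hiv⟩ | ⟨e, he, hie⟩ | ⟨v, e, he, hve, hie⟩
  · obtain ⟨mid, fringe, hg⟩ := R.dome_v v
    rcases hg.eq_top_or_adj_top_of_blocks (R.mem_of_adj_of_ne_top (Or.inl ⟨v, rfl⟩)) (by omega)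
      (by omega) hkN (hblk (hΓv v)) hiv hi with h | h
    · exact Or.inl ⟨v, h⟩
    · exact Or.inr (Or.inr (Or.inr ⟨v, hiv, h⟩))
  · obtain ⟨mid, fringe, hg⟩ := R.dome_e e he
    exact Or.inr (Or.inl ⟨e, he, hg.eq_top_of_blocks
      (R.mem_of_adj_of_ne_top (Or.inr (Or.inl ⟨e, he, rfl⟩))) le_rfl (by omega) h3N
      (R.card_friendsIn_ep_le he C) (hblk (hΓe e he)) hie hi⟩)
  · obtain ⟨mid, fringe, hg⟩ := R.dome_ve v e he hve
    exact Or.inr (Or.inr (Or.inl ⟨v, e, he, hve, hg.eq_top_of_blocks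
      (R.mem_of_adj_of_ne_top (Or.inr (Or.inr ⟨v, e, he, hve, rfl⟩))) le_rfl (by omega) h3N
      (R.card_friendsIn_bp_le he hve C) (hblk (hΓve v e he hve)) hie hi⟩))
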